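/- For every ε > 0 there are only finitely many d ∈ D for which the diameter of F(d) is larger than ε. -/
import Mathlib


open Set Topology

/-- The Cantor space `2^ℕ`, with coordinates indexed by the positive integers. -/
abbrev Cant : Type := ℕ+ → Bool

/-- The support of a point of the Cantor space, as a set of (positive) natural numbers. -/
def ksupp (x : Cant) : Set ℕ := {i | ∃ h : 0 < i, x ⟨i, h⟩ = true}

/-- The plane. -/
abbrev Plane : Type := EuclideanSpace ℝ (Fin 2)

/-- `N_d = max supp d` (with `sSup ∅ = 0` for the zero point). -/
noncomputable def Nd (d : Cant) : ℕ := sSup (ksupp d)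

/-- The basic clopen set `V_d = {y : y(i) = d(i) for 1 ≤ i ≤ N_d}`. -/
noncomputable def Vd (d : Cant) : Set Cant :=
  {y | ∀ i : ℕ+, (i : ℕ) ≤ Nd d → y i = d i}

/-- The set `D_d` of children of `d ∈ D`: the points of `D_{k_d+1}` agreeing with `d`
on the coordinates `1, …, N_d`. -/
noncomputable def Dch (d : Cant) : Set Cant :=
  {e | (ksupp e).Finite ∧ (ksupp e).ncard = (ksupp d).ncard + 1 ∧
    ∀ i : ℕ+, (i : ℕ) ≤ Nd d → e i = d i}

/-- The ball `W(d) = B(σ(d), 2^{−ℓ(d)})`. -/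
noncomputable def Wb (σ : Cant → Plane) (ℓ : Cant → ℕ) (d : Cant) : Set Plane :=
  Metric.ball (σ d) ((2 : ℝ) ^ (-(ℓ d : ℤ)))

/-- The ball `U(d) = B(σ(d), 2^{−ℓ(d)−1})`. -/
noncomputable def Ub (σ : Cant → Plane) (ℓ : Cant → ℕ) (d : Cant) : Set Plane :=
  Metric.ball (σ d) ((2 : ℝ) ^ (-(ℓ d : ℤ) - 1))

/-- The resulting Cantor set `K = ⋂_n cl (⋃ {W(d) : d ∈ D_n})`. -/
noncomputable def Kset (σ : Cant → Plane) (ℓ : Cant → ℕ) : Set Plane :=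
  ⋂ n : ℕ, closure (⋃ d ∈ {d : Cant | (ksupp d).Finite ∧ (ksupp d).ncard = n}, Wb σ ℓ d)

/-- The closed set `F(d) = cl U(d) \ ⋃_{e ∈ D_d} W(e)`. -/
noncomputable def Fd (σ : Cant → Plane) (ℓ : Cant → ℕ) (d : Cant) : Set Plane :=
  closure (Ub σ ℓ d) \ ⋃ e ∈ Dch d, Wb σ ℓ e

/-- The three conditions imposed on the maps `σ : D → ℝ²` and `ℓ : D → ω`:
(1) `⟨σ(e) : e ∈ D_d⟩` converges to `σ(d)` (in the sense that `σ(e)` is close to `σ(d)`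
    once the added support element `N_e` of the child `e` is large);
(2) `cl W(e) ⊆ U(d) \ {σ(d)}` whenever `e ∈ D_d`;
(3) `{cl W(d) : d ∈ D_n}` is pairwise disjoint for every `n`. -/
def CantorConds (σ : Cant → Plane) (ℓ : Cant → ℕ) : Prop :=
  (∀ d : Cant, (ksupp d).Finite → ∀ ε > (0 : ℝ), ∃ M : ℕ, ∀ e ∈ Dch d,
      M ≤ Nd e → dist (σ e) (σ d) < ε) ∧
  (∀ d : Cant, (ksupp d).Finite → ∀ e ∈ Dch d,
      closure (Wb σ ℓ e) ⊆ Ub σ ℓ d \ {σ d}) ∧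
  (∀ n : ℕ, ∀ d e : Cant, (ksupp d).Finite → (ksupp d).ncard = n →
      (ksupp e).Finite → (ksupp e).ncard = n → d ≠ e →
      Disjoint (closure (Wb σ ℓ d)) (closure (Wb σ ℓ e)))

/-- A bounded `r`-separated set in the plane is finite. -/
lemma finite_of_separated {s : Set Plane} (hb : Bornology.IsBounded s) {r : ℝ} (hr : 0 < r)
    (hsep : s.Pairwise fun x y => r < dist x y) : s.Finite := by
  have htb : TotallyBounded s :=
    (hb.isCompact_closure.totallyBounded).subset subset_closure
  obtain ⟨t, htf, hst⟩ := (Metric.totallyBounded_iff.mp htb) (r / 2) (by linarith)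
  have hsub : s ⊆ ⋃ y ∈ t, s ∩ Metric.ball y (r / 2) := by
    intro x hx
    obtain ⟨y, hy, hxy⟩ := Set.mem_iUnion₂.mp (hst hx)
    exact Set.mem_iUnion₂.mpr ⟨y, hy, hx, hxy⟩
  refine Set.Finite.subset (Set.Finite.biUnion htf fun y _ => ?_) hsub
  refine Set.Subsingleton.finite fun a ha b hb' => ?_
  by_contra hab
  have h1 := hsep ha.1 hb'.1 hab
  have h2 : dist a b < r := by
    have := dist_triangle a y b
    have hay : dist a y < r / 2 := ha.2
    have hyb : dist y b < r / 2 := by rw [dist_comm]; exact hb'.2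
    linarith
  linarith

/-- The zero point of the Cantor space. -/
def czero : Cant := fun _ => false

lemma ksupp_czero : ksupp czero = ∅ := by
  ext i; simp [ksupp, czero]

lemma eq_czero_of_ncard_zero {d : Cant} (hd : (ksupp d).Finite)
    (h0 : (ksupp d).ncard = 0) : d = czero := by
  have he : ksupp d = ∅ := (Set.ncard_eq_zero hd).mp h0
  funext i
  by_contra h
  have hi : (i : ℕ) ∈ ksupp d := ⟨i.pos, by
    have : d i = true := by
      cases hdi : d i with
      | false => exact absurd hdi h
      | true => rfl
    exact this⟩
  rw [he] at hi; exact hi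

/-- The parent of a point of `D`. -/
noncomputable def par (d : Cant) : Cant := fun i => if (i : ℕ) = Nd d then false else d i

lemma ksupp_par (d : Cant) : ksupp (par d) = ksupp d \ {Nd d} := by
  ext i
  simp only [ksupp, par, Set.mem_setOf_eq, Set.mem_diff, Set.mem_singleton_iff]
  constructor
  · rintro ⟨h, hi⟩
    change (if i = Nd d then false else d ⟨i, h⟩) = true at hi
    by_cases hne : i = Nd d
    · rw [if_pos hne] at hi; exact absurd hi (by simp)
    · rw [if_neg hne] at hi; exact ⟨⟨h, hi⟩, hne⟩
  · rintro ⟨⟨h, hi⟩, hne⟩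
    refine ⟨h, ?_⟩
    change (if i = Nd d then false else d ⟨i, h⟩) = true
    rw [if_neg hne]
    exact hi

lemma Nd_mem {d : Cant} (hd : (ksupp d).Finite) (hne : (ksupp d).Nonempty) :
    Nd d ∈ ksupp d :=
  Nat.sSup_mem hne hd.bddAbove

lemma Nd_par_lt {d : Cant} (hd : (ksupp d).Finite) (hne : (ksupp d).Nonempty) :
    Nd (par d) < Nd d := by
  have hN := Nd_mem hd hne
  have hNpos : 0 < Nd d := hN.1
  rw [Nd, ksupp_par]
  rcases Set.eq_empty_or_nonempty (ksupp d \ {Nd d}) with h | h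
  · rw [h]; simpa using hNpos
  · have hmem := Nat.sSup_mem h ((hd.subset Set.diff_subset).bddAbove)
    have hle : sSup (ksupp d \ {Nd d}) ≤ Nd d := le_csSup hd.bddAbove hmem.1
    exact lt_of_le_of_ne hle hmem.2

lemma mem_Dch_par {d : Cant} (hd : (ksupp d).Finite) (hne : (ksupp d).Nonempty) :
    d ∈ Dch (par d) ∧ (ksupp (par d)).Finite ∧
      (ksupp (par d)).ncard + 1 = (ksupp d).ncard := by
  have hN := Nd_mem hd hne
  have hfin : (ksupp (par d)).Finite := by rw [ksupp_par]; exact hd.subset Set.diff_subset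
  have hcard : (ksupp (par d)).ncard + 1 = (ksupp d).ncard := by
    rw [ksupp_par]; exact Set.ncard_diff_singleton_add_one hN hd
  refine ⟨⟨hd, hcard.symm, fun i hi => ?_⟩, hfin, hcard⟩
  have hlt : (i : ℕ) < Nd d := lt_of_le_of_lt hi (Nd_par_lt hd hne)
  simp only [par, if_neg hlt.ne]

lemma two_mul_zpow_sub_one (k : ℤ) : 2 * (2 : ℝ) ^ (k - 1) = 2 ^ k := by
  rw [mul_comm, ← zpow_add_one₀ (two_ne_zero : (2 : ℝ) ≠ 0)]
  congr 1
  ring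

section Aux

variable (σ : Cant → Plane) (ℓ : Cant → ℕ)

lemma child_facts (h2 : ∀ d : Cant, (ksupp d).Finite → ∀ e ∈ Dch d,
      closure (Wb σ ℓ e) ⊆ Ub σ ℓ d \ {σ d})
    {d e : Cant} (hd : (ksupp d).Finite) (he : e ∈ Dch d) :
    ℓ d + 1 ≤ ℓ e ∧ Wb σ ℓ e ⊆ Ub σ ℓ d := by
  have hsub : closure (Wb σ ℓ e) ⊆ Ub σ ℓ d := fun x hx => (h2 d hd e he hx).1
  refine ⟨?_, subset_closure.trans hsub⟩
  set re := (2 : ℝ) ^ (-(ℓ e : ℤ)) with hre_def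
  set Rd := (2 : ℝ) ^ (-(ℓ d : ℤ) - 1) with hRd_def
  have hre : 0 < re := by positivity
  set v : Plane := EuclideanSpace.single (0 : Fin 2) (1 : ℝ) with hv_def
  have hnv : ‖v‖ = 1 := by simp [hv_def, EuclideanSpace.norm_single]
  set p : Plane := σ e + re • v with hp_def
  have hdist : dist p (σ e) = re := by
    rw [hp_def, dist_eq_norm, add_sub_cancel_left, norm_smul, hnv, mul_one,
      Real.norm_eq_abs, abs_of_pos hre]
  have hpcl : p ∈ closure (Wb σ ℓ e) := by
    rw [Wb, closure_ball _ (ne_of_gt hre)]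
    exact Metric.mem_closedBall.mpr hdist.le
  have hccl : σ e ∈ closure (Wb σ ℓ e) := subset_closure (Metric.mem_ball_self hre)
  have h1 : dist p (σ d) < Rd := Metric.mem_ball.mp (hsub hpcl)
  have h2' : dist (σ e) (σ d) < Rd := Metric.mem_ball.mp (hsub hccl)
  have hlt : re < (2 : ℝ) ^ (-(ℓ d : ℤ)) := by
    have : re ≤ dist p (σ d) + dist (σ d) (σ e) := by
      rw [← hdist]; exact dist_triangle _ _ _
    have h2'' : dist (σ d) (σ e) < Rd := by rwa [dist_comm]
    have hRd2 : Rd + Rd = (2 : ℝ) ^ (-(ℓ d : ℤ)) := by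
      rw [hRd_def, ← two_mul, two_mul_zpow_sub_one]
    linarith
  have := (zpow_lt_zpow_iff_right₀ (one_lt_two (α := ℝ))).mp hlt
  omega

/-- Combined induction: the level bound and nesting inside `W(czero)`. -/
lemma level_bound (h2 : ∀ d : Cant, (ksupp d).Finite → ∀ e ∈ Dch d,
      closure (Wb σ ℓ e) ⊆ Ub σ ℓ d \ {σ d}) :
    ∀ n : ℕ, ∀ d : Cant, (ksupp d).Finite → (ksupp d).ncard = n →
      n ≤ ℓ d ∧ Wb σ ℓ d ⊆ Wb σ ℓ czero := by
  intro n
  induction n with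
  | zero =>
    intro d hd hn
    rw [eq_czero_of_ncard_zero hd hn]
    exact ⟨Nat.zero_le _, subset_rfl⟩
  | succ n ih =>
    intro d hd hn
    have hne : (ksupp d).Nonempty := by
      rw [Set.nonempty_iff_ne_empty]
      intro h
      rw [h] at hn
      simp [Set.ncard_empty] at hn
    obtain ⟨hmem, hpfin, hpcard⟩ := mem_Dch_par hd hne
    have hpn : (ksupp (par d)).ncard = n := by omega
    obtain ⟨hlev, hnest⟩ := ih (par d) hpfin hpn
    obtain ⟨hlev', hsub⟩ := child_facts σ ℓ h2 hpfin hmem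
    refine ⟨by omega, ?_⟩
    refine hsub.trans (Set.Subset.trans ?_ hnest)
    exact Metric.ball_subset_ball (zpow_le_zpow_right₀ one_le_two (by omega))

lemma diam_Fd_le (d : Cant) : Metric.diam (Fd σ ℓ d) ≤ (2 : ℝ) ^ (-(ℓ d : ℤ)) := by
  have hR : (0 : ℝ) < (2 : ℝ) ^ (-(ℓ d : ℤ) - 1) := by positivity
  have hsub : Fd σ ℓ d ⊆ Metric.closedBall (σ d) ((2 : ℝ) ^ (-(ℓ d : ℤ) - 1)) := by
    intro x hx
    have := hx.1
    rwa [Ub, closure_ball _ (ne_of_gt hR)] at this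
  calc Metric.diam (Fd σ ℓ d)
      ≤ Metric.diam (Metric.closedBall (σ d) ((2 : ℝ) ^ (-(ℓ d : ℤ) - 1))) :=
        Metric.diam_mono hsub Metric.isBounded_closedBall
    _ ≤ 2 * (2 : ℝ) ^ (-(ℓ d : ℤ) - 1) := Metric.diam_closedBall hR.le
    _ = (2 : ℝ) ^ (-(ℓ d : ℤ)) := two_mul_zpow_sub_one _

end Aux

/-- For every `ε > 0` there are only finitely many `d ∈ D` for which the diameter of
`F(d)` is larger than `ε`. -/
theorem Fd_large_diam_finite (σ : Cant → Plane) (ℓ : Cant → ℕ)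
    (hc : CantorConds σ ℓ) (ε : ℝ) (hε : 0 < ε) :
    {d : Cant | (ksupp d).Finite ∧ ε < Metric.diam (Fd σ ℓ d)}.Finite := by
  obtain ⟨h1, h2, h3⟩ := hc
  -- choose `L` with `2^{-L} < ε`
  obtain ⟨L, hL⟩ : ∃ L : ℕ, (2 : ℝ) ^ (-(L : ℤ)) < ε := by
    obtain ⟨L, hL⟩ := exists_pow_lt_of_lt_one hε (by norm_num : (1 : ℝ) / 2 < 1)
    refine ⟨L, ?_⟩
    calc (2 : ℝ) ^ (-(L : ℤ)) = ((1 : ℝ) / 2) ^ L := by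
          rw [zpow_neg, zpow_natCast, one_div, inv_pow]
      _ < ε := hL
  -- the set at each level is finite
  have hlevel : ∀ n : ℕ,
      {d : Cant | ((ksupp d).Finite ∧ ε < Metric.diam (Fd σ ℓ d)) ∧ (ksupp d).ncard = n}.Finite := by
    intro n
    set S := {d : Cant | ((ksupp d).Finite ∧ ε < Metric.diam (Fd σ ℓ d)) ∧ (ksupp d).ncard = n}
      with hS
    -- key separation estimate
    have hkey : ∀ d ∈ S, ∀ e ∈ S, d ≠ e → ε < dist (σ d) (σ e) := by
      intro d hd e he hde
      have hdis := h3 n d e hd.1.1 hd.2 he.1.1 he.2 hde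
      have hεd : ε < (2 : ℝ) ^ (-(ℓ d : ℤ)) :=
        lt_of_lt_of_le hd.1.2 (diam_Fd_le σ ℓ d)
      have hσe : σ e ∈ closure (Wb σ ℓ e) :=
        subset_closure (Metric.mem_ball_self (by positivity))
      have hnot : σ e ∉ closure (Wb σ ℓ d) := fun h =>
        (Set.disjoint_left.mp hdis h) hσe
      rw [Wb, closure_ball _ (by positivity : ((2:ℝ) ^ (-(ℓ d : ℤ))) ≠ 0),
        Metric.mem_closedBall, not_le, dist_comm] at hnot
      exact hεd.trans hnot
    have hinj : Set.InjOn σ S := by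
      intro d hd e he hσ
      by_contra hde
      have := hkey d hd e he hde
      rw [hσ, dist_self] at this
      linarith
    have himg : (σ '' S).Finite := by
      apply finite_of_separated _ hε
      · rintro x ⟨d, hd, rfl⟩ y ⟨e, he, rfl⟩ hxy
        exact hkey d hd e he (fun h => hxy (by rw [h]))
      · have hsub : σ '' S ⊆ Wb σ ℓ czero := by
          rintro x ⟨d, hd, rfl⟩
          exact (level_bound σ ℓ h2 n d hd.1.1 hd.2).2
            (Metric.mem_ball_self (by positivity))
        exact Metric.isBounded_ball.subset hsub
    exact (Set.Finite.of_finite_image himg hinj)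
  -- every `d` in the set has `ncard < L`
  have hsubset : {d : Cant | (ksupp d).Finite ∧ ε < Metric.diam (Fd σ ℓ d)} ⊆
      ⋃ n ∈ Set.Iio L,
        {d : Cant | ((ksupp d).Finite ∧ ε < Metric.diam (Fd σ ℓ d)) ∧ (ksupp d).ncard = n} := by
    intro d hd
    have hlev := (level_bound σ ℓ h2 (ksupp d).ncard d hd.1 rfl).1
    have hεd : ε < (2 : ℝ) ^ (-(ℓ d : ℤ)) := lt_of_lt_of_le hd.2 (diam_Fd_le σ ℓ d)
    have h2l : (2 : ℝ) ^ (-(L : ℤ)) < (2 : ℝ) ^ (-(ℓ d : ℤ)) := hL.trans hεd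
    have : -(L : ℤ) < -(ℓ d : ℤ) := (zpow_lt_zpow_iff_right₀ (one_lt_two (α := ℝ))).mp h2l
    have hlt : (ksupp d).ncard < L := by omega
    exact Set.mem_biUnion hlt ⟨hd, rfl⟩
  exact Set.Finite.subset ((Set.finite_Iio L).biUnion fun n _ => hlevel n) hsubset
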